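/- Let B be a C*-algebra, x, y, q ∈ B positive contractions with q a projection, and suppose ‖x y x − q‖ < 1/8. Then the hereditary C*-subalgebra generated by y (the closure of yBy) contains a projection which is Murray–von Neumann equivalent to q. -/

import Mathlib

/-
The compression `c = q (x y x) q = w* w`, with `w = √y x q`, is within `1/8` of the projection
`q` and is absorbed by it (`q c = c`). Comparing resolvents, the spectrum of `c` lies within `1/6`
of `{0, 1}`, so a continuous `ramp` that is `0` below `1/6` and `1` above `5/6` turns `c` into a
projection `ramp c` below `q` at distance `< 1` from it, i.e. `ramp c = q`. With
`g = rampNormalizer`, so that `g t * t * g t = ramp t`, the element `u = g(c) w*` has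
`u u* = g(c) c g(c) = q`, so `u* u` is a projection equivalent to `q`, and
`u* u = √y (x q g(c)² q x) √y` lies in the closure of `y B y` because `√y` is a limit of elements
`y e` with `e` commuting with `y`.
-/

open Filter Topology

namespace ProjectionPerturbation

noncomputable def ramp (t : ℝ) : ℝ := min 1 (max 0 ((3 / 2) * (t - 1 / 6)))

theorem continuous_ramp : Continuous ramp := by unfold ramp; fun_prop

theorem ramp_nonneg (t : ℝ) : 0 ≤ ramp t := le_min zero_le_one (le_max_left _ _)

theorem ramp_of_le {t : ℝ} (ht : t ≤ 1 / 6) : ramp t = 0 := by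
  rw [ramp, max_eq_left (by linarith), min_eq_right zero_le_one]

theorem ramp_of_ge {t : ℝ} (ht : 5 / 6 ≤ t) : ramp t = 1 := by
  rw [ramp, max_eq_right (by linarith), min_eq_left (by linarith)]

theorem ramp_zero : ramp 0 = 0 := ramp_of_le (by norm_num)

noncomputable def rampNormalizer (t : ℝ) : ℝ := √(ramp t / max t (1 / 6))

theorem continuous_rampNormalizer : Continuous rampNormalizer :=
  Real.continuous_sqrt.comp <| continuous_ramp.div (continuous_id.max continuous_const)
    fun t => (lt_max_of_lt_right (by norm_num)).ne'

theorem rampNormalizer_zero : rampNormalizer 0 = 0 := by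
  simp [rampNormalizer, ramp_zero]

theorem rampNormalizer_mul_mul_self (t : ℝ) :
    rampNormalizer t * t * rampNormalizer t = ramp t := by
  rcases le_total t (1 / 6) with ht | ht
  · simp [rampNormalizer, ramp_of_le ht]
  · have ht0 : 0 < t := by linarith
    rw [mul_right_comm, rampNormalizer, max_eq_left ht,
      Real.mul_self_sqrt (div_nonneg (ramp_nonneg t) ht0.le), div_mul_cancel₀ _ ht0.ne']

noncomputable def sqrtApprox (ε t : ℝ) : ℝ := √t / (|t| + ε)

theorem continuous_sqrtApprox {ε : ℝ} (hε : 0 < ε) : Continuous (sqrtApprox ε) :=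
  Real.continuous_sqrt.div (continuous_abs.add continuous_const) fun t => by positivity

theorem abs_mul_sqrtApprox_sub_sqrt_le {ε t : ℝ} (hε : 0 < ε) (ht : 0 ≤ t) :
    |t * sqrtApprox ε t - √t| ≤ √ε := by
  have htε : 0 < t + ε := by linarith
  have hid : t * sqrtApprox ε t - √t = -(√t * ε / (t + ε)) := by
    rw [sqrtApprox, abs_of_nonneg ht]; field_simp; ring
  rw [hid, abs_neg, abs_of_nonneg (by positivity), div_le_iff₀ htε]
  -- AM-GM: `√t √ε ≤ t + ε`
  nlinarith [Real.sq_sqrt ht, Real.sq_sqrt hε.le, Real.sqrt_nonneg t, Real.sqrt_nonneg ε,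
    mul_nonneg (Real.sqrt_nonneg ε) (sq_nonneg (√t - √ε))]

theorem inv_abs_add_inv_abs_sub_one_lt_eight {t : ℝ} (h0 : 1 / 6 < |t|) (h1 : 1 / 6 < |t - 1|) :
    |t|⁻¹ + |t - 1|⁻¹ < 8 := by
  have hsum : 1 ≤ |t| + |t - 1| := by simpa using abs_sub t (t - 1)
  have hpos0 : 0 < |t| := by linarith
  have hpos1 : 0 < |t - 1| := by linarith
  rcases le_total |t| |t - 1| with h | h
  · have : |t - 1|⁻¹ ≤ 2 := by rw [inv_le_comm₀ hpos1 two_pos]; linarith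
    have : |t|⁻¹ < 6 := by rw [inv_lt_comm₀ hpos0 (by norm_num)]; linarith
    linarith
  · have : |t|⁻¹ ≤ 2 := by rw [inv_le_comm₀ hpos0 two_pos]; linarith
    have : |t - 1|⁻¹ < 6 := by rw [inv_lt_comm₀ hpos1 (by norm_num)]; linarith
    linarith

end ProjectionPerturbation

open ProjectionPerturbation

section Projection

variable {E : Type*} [NonUnitalNormedRing E] [StarRing E] [CStarRing E]

theorem IsStarProjection.eq_zero_of_norm_lt_one {e : E} (he : IsStarProjection e)
    (h : ‖e‖ < 1) : e = 0 := by
  have h2 : ‖e‖ * ‖e‖ = ‖e‖ := by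
    rw [← CStarRing.norm_star_mul_self, he.isSelfAdjoint.star_eq, he.isIdempotentElem.eq]
  exact norm_eq_zero.mp (by nlinarith [norm_nonneg e])

theorem IsStarProjection.eq_of_mul_eq_of_norm_sub_lt_one {p q : E} (hp : IsStarProjection p)
    (hq : IsStarProjection q) (hqp : q * p = p) (h : ‖q - p‖ < 1) : p = q :=
  (sub_eq_zero.mp ((hp.sub_of_mul_eq_right hq hqp).eq_zero_of_norm_lt_one h)).symm

theorem IsStarProjection.norm_mul_mul_sub_le {q : E} (hq : IsStarProjection q) (a : E) :
    ‖q * a * q - q‖ ≤ ‖a - q‖ := by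
  have hq1 := hq.norm_le
  have hqq : q * q * q = q := by rw [hq.isIdempotentElem.eq, hq.isIdempotentElem.eq]
  calc ‖q * a * q - q‖ = ‖q * (a - q) * q‖ := by rw [mul_sub, sub_mul, hqq]
    _ ≤ ‖q‖ * ‖a - q‖ * ‖q‖ := norm_mul₃_le
    _ ≤ 1 * ‖a - q‖ * 1 := by gcongr
    _ = ‖a - q‖ := by ring

theorem mul_eq_of_mul_star_self_isStarProjection {u : E} (hu : IsStarProjection (u * star u)) :
    u * star u * u = u := by
  set q := u * star u
  have hqq : q * q = q := hu.isIdempotentElem.eq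
  have hz : (u - q * u) * star (u - q * u) = 0 := by
    calc (u - q * u) * star (u - q * u) = q - q * q - q * q + q * q * q := by
          simp only [star_sub, star_mul, hu.isSelfAdjoint.star_eq, q]; noncomm_ring
      _ = 0 := by rw [hqq, hqq]; abel
  exact (sub_eq_zero.mp ((CStarRing.mul_star_self_eq_zero_iff _).mp hz)).symm

theorem IsStarProjection.star_mul_self_of_mul_star_self {u : E}
    (hu : IsStarProjection (u * star u)) : IsStarProjection (star u * u) where
  isIdempotentElem := by
    rw [IsIdempotentElem, mul_assoc, ← mul_assoc u, mul_eq_of_mul_star_self_isStarProjection hu]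
  isSelfAdjoint := .star_mul_self u

end Projection

section Gap

variable {A : Type*} [NormedRing A] [CompleteSpace A] [StarRing A] [CStarRing A]
  [NormedAlgebra ℝ A]

theorem IsStarProjection.notMem_spectrum_of_norm_sub_mul_lt_one {q a : A}
    (hq : IsStarProjection q) {t : ℝ} (ht0 : t ≠ 0) (ht1 : t ≠ 1)
    (h : ‖a - q‖ * (|t|⁻¹ + |t - 1|⁻¹) < 1) : t ∉ spectrum ℝ a := by
  have ht1' : t - 1 ≠ 0 := sub_ne_zero.mpr ht1
  -- the inverse of `t - q`, computed separately on the ranges of `1 - q` and `q`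
  set R : A := t⁻¹ • (1 - q) + (t - 1)⁻¹ • q
  have hqq : q * q = q := hq.isIdempotentElem.eq
  have hR : (algebraMap ℝ A t - q) * R = 1 ∧ R * (algebraMap ℝ A t - q) = 1 := by
    simp only [R, Algebra.algebraMap_eq_smul_one, mul_add, add_mul, sub_mul, mul_sub,
      smul_mul_assoc, mul_smul_comm, smul_smul, one_mul, mul_one, hqq, smul_sub]
    constructor <;> match_scalars <;> field_simp <;> ring
  have hRnorm : ‖R‖ ≤ |t|⁻¹ + |t - 1|⁻¹ := by
    have h1 := hq.one_sub.norm_le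
    have h2 := hq.norm_le
    calc ‖R‖ ≤ |t|⁻¹ * ‖1 - q‖ + |t - 1|⁻¹ * ‖q‖ := by
          refine (norm_add_le _ _).trans ?_
          simp only [norm_smul, Real.norm_eq_abs, abs_inv, le_refl]
      _ ≤ |t|⁻¹ * 1 + |t - 1|⁻¹ * 1 := by gcongr
      _ = |t|⁻¹ + |t - 1|⁻¹ := by ring
  have hsmall : ‖R * (a - q)‖ < 1 :=
    calc ‖R * (a - q)‖ ≤ ‖R‖ * ‖a - q‖ := norm_mul_le _ _
      _ ≤ (|t|⁻¹ + |t - 1|⁻¹) * ‖a - q‖ := by gcongr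
      _ < 1 := by rwa [mul_comm]
  have hfactor : algebraMap ℝ A t - a = (algebraMap ℝ A t - q) * (1 - R * (a - q)) := by
    rw [mul_sub, mul_one, ← mul_assoc, hR.1, one_mul]; abel
  rw [spectrum.mem_iff, not_not, hfactor]
  exact (Units.mk _ R hR.1 hR.2).isUnit.mul (Units.oneSub _ hsmall).isUnit

end Gap

section NonUnital

variable {A : Type*} [NonUnitalCStarAlgebra A]

theorem IsStarProjection.quasispectrum_near_zero_or_one {q c : A} (hq : IsStarProjection q)
    (h : ‖c - q‖ < 1 / 8) :
    ∀ t ∈ quasispectrum ℝ c, |t| ≤ 1 / 6 ∨ |t - 1| ≤ 1 / 6 := by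
  intro t ht
  by_contra! hfar
  rw [Unitization.quasispectrum_eq_spectrum_inr' ℝ ℂ] at ht
  set ι := Unitization.inrNonUnitalStarAlgHom ℂ A
  refine (hq.map ι).notMem_spectrum_of_norm_sub_mul_lt_one (a := ι c) ?_ ?_ ?_ ht
  · rintro rfl; norm_num at hfar
  · rintro rfl; norm_num at hfar
  · rw [← map_sub, Unitization.inrNonUnitalStarAlgHom_apply, Unitization.norm_inr]
    calc ‖c - q‖ * (|t|⁻¹ + |t - 1|⁻¹) ≤ 1 / 8 * (|t|⁻¹ + |t - 1|⁻¹) := by gcongr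
      _ < 1 / 8 * 8 := by
          gcongr; exact inv_abs_add_inv_abs_sub_one_lt_eight hfar.1 hfar.2
      _ = 1 := by norm_num

theorem mul_cfcₙ_eq_of_mul_eq {q a : A} (ha : IsSelfAdjoint a) (hqa : q * a = a)
    {φ : ℝ → ℝ} {δ : ℝ} (hδ : 0 < δ) (hφ : Continuous φ)
    (hφa : ∀ t ∈ quasispectrum ℝ a, t ≤ δ → φ t = 0) :
    q * cfcₙ φ a = cfcₙ φ a := by
  set ψ : ℝ → ℝ := fun t => φ t / max t δ
  have hψ : Continuous ψ :=
    hφ.div (continuous_id.max continuous_const) fun t => (lt_max_of_lt_right hδ).ne'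
  have hφ0 : φ 0 = 0 := hφa 0 (quasispectrum.zero_mem ℝ a) hδ.le
  have hfactor : cfcₙ φ a = a * cfcₙ ψ a := by
    nth_rw 2 [← cfcₙ_id' ℝ a]
    rw [← cfcₙ_mul (fun t : ℝ => t) ψ a (hg := hψ.continuousOn) (hg0 := by simp [ψ, hφ0])]
    refine cfcₙ_congr fun t ht => ?_
    rcases le_or_gt t δ with hle | hlt
    · simp [ψ, hφa t ht hle]
    · simp only [ψ, max_eq_left hlt.le]
      field_simp [(hδ.trans hlt).ne']
  rw [hfactor, ← mul_assoc, hqa]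

theorem IsStarProjection.cfcₙ_ramp_eq {q c : A} (hq : IsStarProjection q) (hc : IsSelfAdjoint c)
    (hqc : q * c = c) (h : ‖c - q‖ < 1 / 8) : cfcₙ ramp c = q := by
  have hspec : ∀ t ∈ quasispectrum ℝ c,
      (ramp t = 0 ∧ |t| ≤ 1 / 6) ∨ (ramp t = 1 ∧ |t - 1| ≤ 1 / 6) := by
    intro t ht
    rcases hq.quasispectrum_near_zero_or_one h t ht with h0 | h1
    · exact .inl ⟨ramp_of_le (abs_le.mp h0).2, h0⟩
    · exact .inr ⟨ramp_of_ge (by linarith [(abs_le.mp h1).1]), h1⟩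
  have he : IsStarProjection (cfcₙ ramp c) := by
    refine ⟨?_, cfcₙ_predicate _ _⟩
    rw [IsIdempotentElem, ← cfcₙ_mul ramp ramp c continuous_ramp.continuousOn ramp_zero
      continuous_ramp.continuousOn ramp_zero]
    refine cfcₙ_congr fun t ht => ?_
    rcases hspec t ht with ⟨h0, -⟩ | ⟨h1, -⟩ <;> simp [*]
  have hqe : q * cfcₙ ramp c = cfcₙ ramp c :=
    mul_cfcₙ_eq_of_mul_eq hc hqc (by norm_num : (0 : ℝ) < 1 / 6) continuous_ramp
      fun t _ => ramp_of_le
  have hce : ‖c - cfcₙ ramp c‖ ≤ 1 / 6 := by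
    nth_rw 1 [← cfcₙ_id' ℝ c]
    rw [← cfcₙ_sub (fun t : ℝ => t) ramp c (hg := continuous_ramp.continuousOn)
      (hg0 := ramp_zero)]
    refine norm_cfcₙ_le fun t ht => ?_
    rcases hspec t ht with ⟨h0, ht0⟩ | ⟨h1, ht1⟩
    · simpa [h0] using ht0
    · rwa [h1, Real.norm_eq_abs]
  refine he.eq_of_mul_eq_of_norm_sub_lt_one hq hqe ?_
  calc ‖q - cfcₙ ramp c‖ ≤ ‖q - c‖ + ‖c - cfcₙ ramp c‖ :=
        norm_sub_le_norm_sub_add_norm_sub _ _ _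
    _ < 1 := by rw [norm_sub_rev]; linarith

theorem IsStarProjection.exists_mul_star_self_eq {q w : A} (hq : IsStarProjection q)
    (hqw : q * star w = star w) (h : ‖star w * w - q‖ < 1 / 8) :
    ∃ u : A, u * star u = q ∧ ∃ b : A, star u * u = w * b * star w := by
  set c := star w * w
  set g := cfcₙ rampNormalizer c
  have hg : IsSelfAdjoint g := cfcₙ_predicate _ _
  have hcont := continuous_rampNormalizer.continuousOn (s := quasispectrum ℝ c)
  have hcq : cfcₙ ramp c = q :=
    hq.cfcₙ_ramp_eq (.star_mul_self w) (by rw [← mul_assoc, hqw]) h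
  refine ⟨g * star w, ?_, g * g, ?_⟩
  · calc g * star w * star (g * star w) = g * c * g := by
          rw [star_mul, star_star, hg.star_eq]; simp only [c, mul_assoc]
      _ = cfcₙ (fun t => rampNormalizer t * t) c * g := by
          rw [cfcₙ_mul rampNormalizer (fun t => t) c hcont rampNormalizer_zero, cfcₙ_id' ℝ c]
      _ = cfcₙ (fun t => rampNormalizer t * t * rampNormalizer t) c := by
          rw [cfcₙ_mul (fun t => rampNormalizer t * t) rampNormalizer c (hf0 := mul_zero _)
            (hg := hcont) (hg0 := rampNormalizer_zero)]
      _ = q := by rw [← hcq]; exact cfcₙ_congr fun t _ => rampNormalizer_mul_mul_self t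
  · rw [star_mul, star_star, hg.star_eq]
    simp only [mul_assoc]

section Sqrt

variable [PartialOrder A] [StarOrderedRing A]

theorem norm_mul_cfcₙ_sqrtApprox_sub_sqrt_le {y : A} (hy : 0 ≤ y) {ε : ℝ} (hε : 0 < ε) :
    ‖y * cfcₙ (sqrtApprox ε) y - CFC.sqrt y‖ ≤ √ε := by
  nth_rw 1 [← cfcₙ_id' ℝ y]
  rw [← cfcₙ_mul (fun t : ℝ => t) _ y (hg := (continuous_sqrtApprox hε).continuousOn)
    (hg0 := by simp [sqrtApprox]), CFC.sqrt_eq_real_sqrt y hy,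
    ← cfcₙ_sub (fun t : ℝ => t * sqrtApprox ε t) Real.sqrt y
      (hf := (continuous_id.mul (continuous_sqrtApprox hε)).continuousOn) (hf0 := zero_mul _)]
  exact norm_cfcₙ_le fun t ht =>
    abs_mul_sqrtApprox_sub_sqrt_le hε (quasispectrum_nonneg_of_nonneg y hy t ht)

theorem sqrt_mul_mul_sqrt_mem_closure {y : A} (hy : 0 ≤ y) (b : A) :
    CFC.sqrt y * b * CFC.sqrt y ∈ closure {z : A | ∃ b' : A, z = y * b' * y} := by
  set e : ℕ → A := fun n => cfcₙ (sqrtApprox (1 / (n + 1))) y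
  have hlim : Tendsto (fun n => y * e n) atTop (𝓝 (CFC.sqrt y)) := by
    have hε : Tendsto (fun n : ℕ => √(1 / ((n : ℝ) + 1))) atTop (𝓝 0) := by
      have := (Real.continuous_sqrt.tendsto 0).comp tendsto_one_div_add_atTop_nhds_zero_nat
      rwa [Real.sqrt_zero] at this
    rw [tendsto_iff_norm_sub_tendsto_zero]
    exact squeeze_zero (fun _ => norm_nonneg _)
      (fun n => norm_mul_cfcₙ_sqrtApprox_sub_sqrt_le hy (by positivity)) hε
  have hlim' : Tendsto (fun n => e n * y) atTop (𝓝 (CFC.sqrt y)) :=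
    hlim.congr fun n => (((Commute.refl y).cfcₙ_real _).eq).symm
  exact mem_closure_of_tendsto ((hlim.mul tendsto_const_nhds).mul hlim')
    (Eventually.of_forall fun n => ⟨e n * b * e n, by simp only [mul_assoc]⟩)

end Sqrt

end NonUnital

theorem stmt7_general {B : Type*} [NonUnitalCStarAlgebra B] [PartialOrder B]
    [StarOrderedRing B]
    (x y q : B) (hx : 0 ≤ x) (hy : 0 ≤ y)
    (hqproj : IsSelfAdjoint q ∧ q * q = q)
    (hnear : ‖x * y * x - q‖ < 1/8) :
    ∃ p ∈ closure {z : B | ∃ b : B, z = y * b * y},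
      (IsSelfAdjoint p ∧ p * p = p) ∧
        ∃ v : B, star v * v = p ∧ v * star v = q := by
  have hq : IsStarProjection q := ⟨hqproj.2, hqproj.1⟩
  set s := CFC.sqrt y
  have hs : star s = s := (CFC.sqrt_nonneg y).isSelfAdjoint.star_eq
  have hw : star (s * x * q) = q * x * s := by
    simp only [star_mul, hq.isSelfAdjoint.star_eq, hx.isSelfAdjoint.star_eq, hs, mul_assoc]
  have hww : star (s * x * q) * (s * x * q) = q * (x * y * x) * q := by
    rw [hw, ← CFC.sqrt_mul_sqrt_self y hy]; simp only [s, mul_assoc]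
  obtain ⟨u, hu, b, hub⟩ := hq.exists_mul_star_self_eq (w := s * x * q)
    (by rw [hw, ← mul_assoc, ← mul_assoc, hqproj.2])
    (by rw [hww]; exact (hq.norm_mul_mul_sub_le _).trans_lt hnear)
  have hp := IsStarProjection.star_mul_self_of_mul_star_self (hu ▸ hq)
  refine ⟨star u * u, ?_, ⟨hp.isSelfAdjoint, hp.isIdempotentElem.eq⟩, u, rfl, hu⟩
  rw [hub, hw]
  convert sqrt_mul_mul_sqrt_mem_closure hy (x * q * b * q * x) using 1
  simp only [s, mul_assoc]

/-- Perturbation lemma: if `x, y, q` are positive contractions with `q` a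
projection and `‖xyx − q‖ < 1/8`, then the hereditary subalgebra generated by
`y` (the closure of `yBy`) contains a projection Murray–von Neumann equivalent
to `q`. -/
theorem stmt7 {B : Type*} [NonUnitalCStarAlgebra B] [PartialOrder B]
    [StarOrderedRing B]
    (x y q : B) (hx : 0 ≤ x) (hx1 : ‖x‖ ≤ 1) (hy : 0 ≤ y) (hy1 : ‖y‖ ≤ 1)
    (hq : 0 ≤ q) (hq1 : ‖q‖ ≤ 1)
    (hqproj : IsSelfAdjoint q ∧ q * q = q)
    (hnear : ‖x * y * x - q‖ < 1/8) :
    ∃ p ∈ closure {z : B | ∃ b : B, z = y * b * y},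
      (IsSelfAdjoint p ∧ p * p = p) ∧
        ∃ v : B, star v * v = p ∧ v * star v = q :=
  stmt7_general x y q hx hy hqproj hnear
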